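/- If 𝔠 ∈ D satisfies the regularity condition liminf_{N→∞} min_{1≤j≤n} |𝔠 − λ_j⁻¹| > 0, then there exists δ > 0 such that for every sufficiently large N the closed disc {z ∈ ℂ : |z − 𝔠| ≤ δ} contains none of the points 0, λ_1⁻¹, …, λ_n⁻¹ (so g_N is holomorphic on this disc), its intersection with ℝ is contained in D, and sup_{|z−𝔠|≤δ} |g_N(z) − g(z)| → 0 as N → ∞. -/

import Mathlib

/-!
Both `g_N` and `g` are `z⁻¹` plus an average of `l ↦ l / (1 - z l)`: against the spectral measure
`ν_N` weighted by `n / N`, and against `γ ν`. On a small disc around `𝔠`, the support of `ν` and,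
for large `N`, all the `λ_j` lie in one compact set `K` on which `1 - z l` stays away from `0`.
Weak convergence extends to functions that are merely continuous on `K` (Tietze), which gives
pointwise convergence on the disc; the lower bound on `|1 - z l|` makes the averages
equi-Lipschitz there, and equi-Lipschitz pointwise convergence on a compact set is uniform.
-/

open MeasureTheory Filter Topology
open scoped ENNReal Classical

noncomputable section

/-- The (topological) support of a Borel measure on `ℝ`: the set of points all of whose
neighborhoods have positive measure. -/
def msupport (μ : Measure ℝ) : Set ℝ := {x | ∀ U ∈ nhds x, μ U ≠ 0}

open Metric Set
open scoped NNReal BoundedContinuousFunction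

theorem ae_mem_msupport (μ : Measure ℝ) : ∀ᵐ x ∂μ, x ∈ msupport μ := by
  refine measure_null_of_locally_null _ fun x hx => ?_
  obtain ⟨U, hU, hU0⟩ : ∃ U ∈ 𝓝 x, μ U = 0 := by simpa [msupport] using hx
  exact ⟨U, mem_nhdsWithin_of_mem_nhds hU, hU0⟩

section EmpiricalMeasure

variable {X ι 𝕜 : Type*} [TopologicalSpace X] [RCLike 𝕜]

theorem ContinuousOn.exists_boundedContinuous_eqOn [NormalSpace X] [T2Space X] {K : Set X}
    (hK : IsCompact K) {f : X → 𝕜} (hf : ContinuousOn f K) : ∃ F : X →ᵇ 𝕜, EqOn F f K := by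
  obtain ⟨R, hR⟩ := hK.exists_bound_of_continuousOn hf
  have := Metric.instTietzeExtensionClosedBall 𝕜 (0 : 𝕜) (lt_max_of_lt_right one_pos : 0 < max R 1)
  obtain ⟨g, hg_mem, hg⟩ := ContinuousMap.exists_forall_mem_restrict_eq hK.isClosed
    ⟨K.domRestrict f, hf.domRestrict⟩ (t := closedBall 0 (max R 1))
    fun y => mem_closedBall_zero_iff.2 ((hR y y.2).trans (le_max_left _ _))
  refine ⟨.ofNormedAddCommGroup g g.continuous (max R 1) fun y =>
    mem_closedBall_zero_iff.1 (hg_mem y), fun y hy => ?_⟩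
  exact congr($hg ⟨y, hy⟩)

/-- The empirical measures `(k i)⁻¹ ∑ⱼ δ_{x i j}` converge weakly to `μ` along `l`. -/
def EmpiricalTendsto [MeasurableSpace X] {k : ι → ℕ} (l : Filter ι) (x : (i : ι) → Fin (k i) → X)
    (μ : Measure X) : Prop :=
  ∀ f : X →ᵇ ℝ, Tendsto (fun i => (k i : ℝ)⁻¹ * ∑ j, f (x i j)) l (𝓝 (∫ y, f y ∂μ))

variable [MeasurableSpace X] [OpensMeasurableSpace X] {μ : Measure X} [IsFiniteMeasure μ]
  {l : Filter ι} {k : ι → ℕ} {x : (i : ι) → Fin (k i) → X}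

theorem tendsto_average_of_boundedContinuous (hweak : EmpiricalTendsto l x μ) (f : X →ᵇ 𝕜) :
    Tendsto (fun i => (k i : 𝕜)⁻¹ * ∑ j, f (x i j)) l (𝓝 (∫ y, f y ∂μ)) := by
  rw [← integral_re_add_im (f.integrable μ)]
  have hre := ((RCLike.continuous_ofReal (K := 𝕜)).tendsto _).comp
    (hweak (f.comp RCLike.re RCLike.lipschitzWith_re))
  have him := ((RCLike.continuous_ofReal (K := 𝕜)).tendsto _).comp
    (hweak (f.comp RCLike.im RCLike.lipschitzWith_im))
  refine (hre.add (him.mul_const RCLike.I)).congr fun i => ?_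
  simp only [Function.comp_apply, BoundedContinuousFunction.comp_apply, RCLike.ofReal_mul,
    RCLike.ofReal_inv, RCLike.ofReal_natCast, RCLike.ofReal_sum, mul_assoc, ← mul_add,
    Finset.sum_mul, ← Finset.sum_add_distrib, RCLike.re_add_im]

theorem tendsto_average_of_continuousOn [NormalSpace X] [T2Space X]
    (hweak : EmpiricalTendsto l x μ) {K : Set X} (hK : IsCompact K) {f : X → 𝕜} (hf : ContinuousOn f K)
    (hμK : ∀ᵐ y ∂μ, y ∈ K) (hxK : ∀ᶠ i in l, ∀ j, x i j ∈ K) :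
    Tendsto (fun i => (k i : 𝕜)⁻¹ * ∑ j, f (x i j)) l (𝓝 (∫ y, f y ∂μ)) := by
  obtain ⟨F, hF⟩ := hf.exists_boundedContinuous_eqOn hK
  rw [← integral_congr_ae (hμK.mono fun y hy => hF hy)]
  refine (tendsto_average_of_boundedContinuous hweak F).congr' ?_
  filter_upwards [hxK] with i hi
  rw [Finset.sum_congr rfl fun j _ => hF (hi j)]

end EmpiricalMeasure

theorem tendsto_natCast_inv_mul_sum {n : ℕ → ℕ} {a : (N : ℕ) → Fin (n N) → ℂ} {γ : ℝ} {A : ℂ}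
    (hn : Tendsto (fun N => (n N : ℝ) / N) atTop (𝓝 γ))
    (ha : Tendsto (fun N => (n N : ℂ)⁻¹ * ∑ j, a N j) atTop (𝓝 A)) :
    Tendsto (fun N : ℕ => (N : ℂ)⁻¹ * ∑ j, a N j) atTop (𝓝 (γ * A)) := by
  refine (((Complex.continuous_ofReal.tendsto γ).comp hn).mul ha).congr fun N => ?_
  rcases eq_or_ne (n N) 0 with h | h
  · have : IsEmpty (Fin (n N)) := by rw [h]; infer_instance
    simp
  · simp only [Function.comp_apply, Complex.ofReal_div, Complex.ofReal_natCast]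
    field_simp

theorem tendstoUniformlyOn_of_lipschitzOnWith {ι α β : Type*} [PseudoMetricSpace α]
    [PseudoMetricSpace β] {p : Filter ι} [p.NeBot] {F : ι → α → β} {f : α → β} {s : Set α}
    {L : ℝ≥0} (hs : TotallyBounded s) (hF : ∀ᶠ i in p, LipschitzOnWith L (F i) s)
    (hlim : ∀ x ∈ s, Tendsto (F · x) p (𝓝 (f x))) : TendstoUniformlyOn F f p s := by
  have hf : LipschitzOnWith L f s := .of_dist_le_mul fun x hx y hy =>
    le_of_tendsto ((hlim x hx).dist (hlim y hy)) (hF.mono fun i hi => hi.dist_le_mul x hx y hy)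
  rw [Metric.tendstoUniformlyOn_iff]
  intro ε hε
  obtain ⟨r, hr, hLr⟩ : ∃ r > 0, (2 * L + 1) * r = ε / 3 :=
    ⟨ε / 3 / (2 * L + 1), by positivity, by field_simp⟩
  obtain ⟨t, hts, ht, hcover⟩ := finite_approx_of_totallyBounded hs r hr
  have hnear : ∀ᶠ i in p, ∀ y ∈ t, dist (F i y) (f y) < ε / 3 :=
    ht.eventually_all.2 fun y hy => (hlim y (hts hy)).eventually (ball_mem_nhds _ (by positivity))
  filter_upwards [hF, hnear] with i hFi hi x hx
  obtain ⟨y, hy, hxy⟩ := mem_iUnion₂.1 (hcover hx)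
  have hxy : dist x y ≤ r := (mem_ball.1 hxy).le
  have hfxy : dist (f x) (f y) ≤ L * r :=
    (hf.dist_le_mul x hx y (hts hy)).trans (by gcongr)
  have hFxy : dist (F i y) (F i x) ≤ L * r :=
    (hFi.dist_le_mul y (hts hy) x hx).trans (by rw [dist_comm]; gcongr)
  calc dist (f x) (F i x) ≤ dist (f x) (f y) + dist (f y) (F i y) + dist (F i y) (F i x) :=
        dist_triangle4 _ _ _ _
    _ < ε := by rw [dist_comm (f y)]; linarith [hi y hy]

theorem dist_div_one_sub_mul_le {z u : ℂ} {l q : ℝ} (hq : 0 < q) (hz : q ≤ ‖1 - z * l‖)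
    (hu : q ≤ ‖1 - u * l‖) : dist (l / (1 - z * l)) (l / (1 - u * l)) ≤ (l / q) ^ 2 * dist z u := by
  have hz0 : 1 - z * l ≠ 0 := norm_pos_iff.1 (hq.trans_le hz)
  have hu0 : 1 - u * l ≠ 0 := norm_pos_iff.1 (hq.trans_le hu)
  have : (l : ℂ) / (1 - z * l) - l / (1 - u * l) =
      l ^ 2 * (z - u) / ((1 - z * l) * (1 - u * l)) := by
    rw [div_sub_div _ _ hz0 hu0]; ring
  rw [dist_eq_norm, this, norm_div, norm_mul, norm_mul, norm_pow, Complex.norm_real,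
    Real.norm_eq_abs, sq_abs, ← dist_eq_norm, div_pow, div_mul_eq_mul_div, sq q]
  gcongr

theorem lipschitzOnWith_inv_mul_sum_div_one_sub_mul {s : Set ℂ} {k N : ℕ} {a : Fin k → ℝ}
    {R q : ℝ} (hq : 0 < q) (ha : ∀ j, |a j| ≤ R) (hs : ∀ z ∈ s, ∀ j, q ≤ ‖1 - z * a j‖) :
    LipschitzOnWith (k / N * (R / q) ^ 2).toNNReal
      (fun z => (N : ℂ)⁻¹ * ∑ j, (a j : ℂ) / (1 - z * a j)) s := by
  refine .of_dist_le_mul fun z hz u hu => ?_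
  rw [dist_eq_norm, ← mul_sub, norm_mul, ← dist_eq_norm, norm_inv, Complex.norm_natCast]
  calc (N : ℝ)⁻¹ * dist (∑ j, (a j : ℂ) / (1 - z * a j)) (∑ j, (a j : ℂ) / (1 - u * a j))
      ≤ (N : ℝ)⁻¹ * ∑ _j : Fin k, (R / q) ^ 2 * dist z u := by
        gcongr
        refine dist_sum_sum_le_of_le _ fun j _ => (dist_div_one_sub_mul_le hq (hs z hz j)
          (hs u hu j)).trans ?_
        rw [← sq_abs, abs_div, abs_of_pos hq]
        gcongr
        exact ha j
    _ = _ := by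
        rw [Real.coe_toNNReal _ (by positivity), Finset.sum_const, Finset.card_univ,
          Fintype.card_fin, nsmul_eq_mul]
        ring

theorem tendstoUniformlyOn_inv_mul_sum_div_one_sub_mul {ν : Measure ℝ} [IsFiniteMeasure ν]
    {n : ℕ → ℕ} {lam : (N : ℕ) → Fin (n N) → ℝ} {γ : ℝ}
    (hn : Tendsto (fun N => (n N : ℝ) / N) atTop (𝓝 γ))
    (hweak : EmpiricalTendsto atTop lam ν)
    {B : Set ℂ} (hB : IsCompact B) {K : Set ℝ} (hK : IsCompact K)
    (hBK : ∀ z ∈ B, ∀ l ∈ K, z * l ≠ 1) (hνK : ∀ᵐ l ∂ν, l ∈ K)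
    (hlamK : ∀ᶠ N in atTop, ∀ j, lam N j ∈ K) :
    TendstoUniformlyOn (fun (N : ℕ) (z : ℂ) => (N : ℂ)⁻¹ * ∑ j, (lam N j : ℂ) / (1 - z * lam N j))
      (fun z => (γ : ℂ) * ∫ l, (l : ℂ) / (1 - z * l) ∂ν) atTop B := by
  have hden : ∀ z ∈ B, ∀ l ∈ K, 1 - z * l ≠ 0 := fun z hz l hl =>
    sub_ne_zero.2 (hBK z hz l hl).symm
  obtain ⟨q, hq, hqBK⟩ := (hB.prod hK).exists_forall_le' (f := fun p : ℂ × ℝ => ‖1 - p.1 * p.2‖)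
    (by fun_prop) (a := 0) fun p hp => norm_pos_iff.2 (hden _ hp.1 _ hp.2)
  obtain ⟨R, hR⟩ := hK.isBounded.exists_norm_le
  refine tendstoUniformlyOn_of_lipschitzOnWith hB.totallyBounded
    (L := ((γ + 1) * (R / q) ^ 2).toNNReal) ?_ fun z hz => ?_
  · filter_upwards [hlamK, hn.eventually (gt_mem_nhds (lt_add_one γ))] with N hN hnN
    refine (lipschitzOnWith_inv_mul_sum_div_one_sub_mul hq (fun j => hR _ (hN j))
      fun z hz j => hqBK (z, _) ⟨hz, hN j⟩).weaken (Real.toNNReal_le_toNNReal ?_)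
    gcongr
  · have hcont : ContinuousOn (fun l : ℝ => (l : ℂ) / (1 - z * l)) K :=
      ContinuousOn.div (by fun_prop) (by fun_prop) (hden z hz)
    have havg := tendsto_average_of_continuousOn (𝕜 := ℂ) (x := lam) hweak hK hcont hνK hlamK
    exact tendsto_natCast_inv_mul_sum (a := fun N j => (lam N j : ℂ) / (1 - z * lam N j)) hn havg

theorem isOpen_setOf_ne_zero_inv_notMem {S : Set ℝ} (hS : IsClosed S) :
    IsOpen {x : ℝ | x ≠ 0 ∧ x⁻¹ ∉ S} :=
  continuousOn_inv₀.isOpen_inter_preimage isOpen_ne hS.isOpen_compl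

theorem exists_closedBall_ofReal_subset {U : Set ℝ} (hU : IsOpen U) {c : ℝ} (hc : c ∈ U) {ε : ℝ}
    (hε : 0 < ε) : ∃ δ > 0, δ < ε ∧ ∀ x : ℝ, (x : ℂ) ∈ closedBall (c : ℂ) δ → x ∈ U := by
  obtain ⟨r, hr, hball⟩ := Metric.isOpen_iff.1 hU c hc
  refine ⟨min (ε / 2) (r / 2), by positivity, by linarith [min_le_left (ε / 2) (r / 2)],
    fun x hx => hball ?_⟩
  rw [mem_closedBall, Complex.isometry_ofReal.dist_eq] at hx
  exact mem_ball.2 (hx.trans_lt (by linarith [min_le_right (ε / 2) (r / 2)]))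

theorem exists_isCompact_eventually_mem_of_le_abs_sub_inv {ι : Type*} {p : Filter ι} {k : ι → ℕ}
    {x : (i : ι) → Fin (k i) → ℝ} {c ε ε₀ C : ℝ} (hε₀ : 0 < ε₀)
    (hge : ∀ᶠ i in p, ∀ j, ε₀ ≤ x i j) (hle : ∀ᶠ i in p, ∀ j, x i j ≤ C)
    (hfar : ∀ᶠ i in p, ∀ j, ε ≤ |c - (x i j)⁻¹|) :
    ∃ K : Set ℝ, IsCompact K ∧ (∀ l ∈ K, ε ≤ |c - l⁻¹|) ∧ ∀ᶠ i in p, ∀ j, x i j ∈ K := by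
  have key : ∀ l > 0, |c * l - 1| = |c - l⁻¹| * l := fun l hl => by
    rw [← abs_of_pos hl, ← abs_mul, abs_of_pos hl, sub_mul, inv_mul_cancel₀ hl.ne']
  -- `ε ≤ |c - l⁻¹|` multiplied through by `l > 0`, so that the set is closed
  refine ⟨Icc ε₀ C ∩ {l | ε * l ≤ |c * l - 1|},
    isCompact_Icc.inter_right (isClosed_le (by fun_prop) (by fun_prop)),
    fun l ⟨⟨hl, _⟩, hlc⟩ => ?_, ?_⟩
  · have hpos := hε₀.trans_le hl
    rw [mem_ofPred_eq, key l hpos] at hlc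
    exact le_of_mul_le_mul_right hlc hpos
  · filter_upwards [hge, hle, hfar] with i hge hle hfar j
    have hpos := hε₀.trans_le (hge j)
    refine ⟨⟨hge j, hle j⟩, ?_⟩
    rw [mem_ofPred_eq, key _ hpos]
    exact mul_le_mul_of_nonneg_right (hfar j) hpos.le

theorem differentiableOn_inv_add_mul_sum_div_one_sub_mul {k : ℕ} (a : Fin k → ℝ) (w : ℂ)
    {s : Set ℂ} (h0 : (0 : ℂ) ∉ s) (ha : ∀ z ∈ s, ∀ j, z * a j ≠ 1) :
    DifferentiableOn ℂ (fun z => z⁻¹ + w * ∑ j, (a j : ℂ) / (1 - z * a j)) s :=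
  (differentiableOn_inv.mono fun z hz => ne_of_mem_of_not_mem hz h0).add
    (.const_mul (.fun_sum fun j _ => .div (differentiableOn_const _) (by fun_prop)
      fun z hz => sub_ne_zero.2 (ha z hz j).symm) _)

theorem regularity_uniform_convergence_general
    (γ : ℝ)
    (ν : Measure ℝ) [IsProbabilityMeasure ν]
    (hν_comp : IsCompact (msupport ν))
    (n : ℕ → ℕ) (hn : Tendsto (fun N => (n N : ℝ) / N) atTop (nhds γ))
    (lam : (N : ℕ) → Fin (n N) → ℝ)
    (hlam_inf : ∃ ε > 0, ∀ᶠ N in atTop, ∀ j, ε ≤ lam N j)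
    (hlam_sup : ∃ C : ℝ, ∀ N, ∀ j, lam N j ≤ C)
    (hweak : ∀ f : BoundedContinuousFunction ℝ ℝ,
      Tendsto (fun N => (n N : ℝ)⁻¹ * ∑ j, f (lam N j)) atTop (nhds (∫ x, f x ∂ν)))
    -- the functions g_N and g, extended to the complex plane
    (gC : ℂ → ℂ) (hgC : gC = fun z => z⁻¹ + (γ : ℂ) * ∫ l, (l : ℂ) / (1 - z * l) ∂ν)
    (gNC : ℕ → ℂ → ℂ)
    (hgNC : gNC = fun (N : ℕ) (z : ℂ) => z⁻¹ + (N : ℂ)⁻¹ * ∑ j, (lam N j : ℂ) / (1 - z * lam N j))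
    (Dset : Set ℝ) (hD : Dset = {x : ℝ | x ≠ 0 ∧ x⁻¹ ∉ msupport ν})
    -- the point 𝔠 and the regularity condition
    (c : ℝ) (hcD : c ∈ Dset)
    (hreg : ∃ ε > 0, ∀ᶠ N in atTop, ∀ j, ε ≤ |c - (lam N j)⁻¹|) :
    ∃ δ > 0,
      (∀ᶠ N in atTop,
        (0 : ℂ) ∉ Metric.closedBall (c : ℂ) δ ∧
        (∀ j, ((lam N j : ℂ))⁻¹ ∉ Metric.closedBall (c : ℂ) δ) ∧
        DifferentiableOn ℂ (gNC N) (Metric.closedBall (c : ℂ) δ)) ∧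
      (∀ x : ℝ, (x : ℂ) ∈ Metric.closedBall (c : ℂ) δ → x ∈ Dset) ∧
      TendstoUniformlyOn (fun N z => gNC N z) gC atTop (Metric.closedBall (c : ℂ) δ) := by
  subst hgC hgNC hD
  obtain ⟨ε₀, hε₀, hlam_ge⟩ := hlam_inf
  obtain ⟨C, hC⟩ := hlam_sup
  obtain ⟨ε, hε, hlam_far⟩ := hreg
  obtain ⟨K, hK, hK_far, hlamK⟩ := exists_isCompact_eventually_mem_of_le_abs_sub_inv hε₀ hlam_ge
    (.of_forall hC) hlam_far
  obtain ⟨δ, hδ, hδε, hδD⟩ :=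
    exists_closedBall_ofReal_subset (isOpen_setOf_ne_zero_inv_notMem hν_comp.isClosed) hcD hε
  set B := closedBall (c : ℂ) δ
  have hK_B : ∀ l ∈ K, ((l⁻¹ : ℝ) : ℂ) ∉ B := fun l hl hmem => by
    rw [mem_closedBall, Complex.isometry_ofReal.dist_eq, Real.dist_eq, abs_sub_comm] at hmem
    linarith [hK_far l hl]
  have hBK : ∀ z ∈ B, ∀ l ∈ msupport ν ∪ K, z * l ≠ 1 := by
    intro z hz l hl hzl
    have hz : ((l⁻¹ : ℝ) : ℂ) ∈ B := by
      rwa [Complex.ofReal_inv, ← eq_inv_of_mul_eq_one_left hzl]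
    rcases hl with hl | hl
    · exact (hδD _ hz).2 (by rwa [inv_inv])
    · exact hK_B l hl hz
  have hconst : TendstoUniformlyOn (fun (_ : ℕ) (z : ℂ) => z⁻¹) (fun z => z⁻¹) atTop B :=
    fun _ hu => .of_forall fun _ _ _ => refl_mem_uniformity hu
  refine ⟨δ, hδ, ?_, hδD, hconst.add (tendstoUniformlyOn_inv_mul_sum_div_one_sub_mul hn hweak
    (isCompact_closedBall _ _) (hν_comp.union hK) hBK
    ((ae_mem_msupport ν).mono fun l hl => .inl hl) (hlamK.mono fun N hN j => .inr (hN j)))⟩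
  have h0 : (0 : ℂ) ∉ B := fun h => (hδD 0 (by simpa using h)).1 rfl
  filter_upwards [hlamK] with N hN
  refine ⟨h0, fun j => by simpa only [Complex.ofReal_inv] using hK_B _ (hN j), ?_⟩
  exact differentiableOn_inv_add_mul_sum_div_one_sub_mul _ _ h0 fun z hz j =>
    hBK z hz _ (.inr (hN j))

/-- Under the regularity condition at `𝔠 ∈ D`, for some `δ > 0` the functions
`g_N` are eventually holomorphic on the closed `δ`-disc around `𝔠` (which avoids `0` and all
`λ_j⁻¹` and whose real trace lies in `D`) and converge uniformly to `g` there. -/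
theorem regularity_uniform_convergence
    (γ : ℝ) (hγ : 0 < γ)
    (ν : Measure ℝ) [IsProbabilityMeasure ν]
    (hν_comp : IsCompact (msupport ν)) (hν_pos : msupport ν ⊆ Set.Ioi 0)
    (n : ℕ → ℕ) (hn : Tendsto (fun N => (n N : ℝ) / N) atTop (nhds γ))
    (lam : (N : ℕ) → Fin (n N) → ℝ)
    (hlam_mono : ∀ N, Monotone (lam N))
    (hlam_pos : ∀ N j, 0 < lam N j)
    (hlam_inf : ∃ ε > 0, ∀ᶠ N in atTop, ∀ j, ε ≤ lam N j)
    (hlam_sup : ∃ C : ℝ, ∀ N, ∀ j, lam N j ≤ C)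
    (hweak : ∀ f : BoundedContinuousFunction ℝ ℝ,
      Tendsto (fun N => (n N : ℝ)⁻¹ * ∑ j, f (lam N j)) atTop (nhds (∫ x, f x ∂ν)))
    -- the functions g_N and g, extended to the complex plane
    (gC : ℂ → ℂ) (hgC : gC = fun z => z⁻¹ + (γ : ℂ) * ∫ l, (l : ℂ) / (1 - z * l) ∂ν)
    (gNC : ℕ → ℂ → ℂ)
    (hgNC : gNC = fun (N : ℕ) (z : ℂ) => z⁻¹ + (N : ℂ)⁻¹ * ∑ j, (lam N j : ℂ) / (1 - z * lam N j))
    (Dset : Set ℝ) (hD : Dset = {x : ℝ | x ≠ 0 ∧ x⁻¹ ∉ msupport ν})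
    -- the point 𝔠 and the regularity condition
    (c : ℝ) (hcD : c ∈ Dset)
    (hreg : ∃ ε > 0, ∀ᶠ N in atTop, ∀ j, ε ≤ |c - (lam N j)⁻¹|) :
    ∃ δ > 0,
      (∀ᶠ N in atTop,
        (0 : ℂ) ∉ Metric.closedBall (c : ℂ) δ ∧
        (∀ j, ((lam N j : ℂ))⁻¹ ∉ Metric.closedBall (c : ℂ) δ) ∧
        DifferentiableOn ℂ (gNC N) (Metric.closedBall (c : ℂ) δ)) ∧
      (∀ x : ℝ, (x : ℂ) ∈ Metric.closedBall (c : ℂ) δ → x ∈ Dset) ∧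
      TendstoUniformlyOn (fun N z => gNC N z) gC atTop (Metric.closedBall (c : ℂ) δ) :=
  regularity_uniform_convergence_general γ ν hν_comp n hn lam hlam_inf hlam_sup hweak gC hgC gNC
    hgNC Dset hD c hcD hreg

end
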